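/- Let n ≥ 1 and let σ, τ be permutations of Fin n, each satisfying ℓ(σ) + ℓ(σ⁻¹ * s) = n − 1 and ℓ(τ) + ℓ(τ⁻¹ * s) = n − 1, such that every σ-orbit is contained in a τ-orbit and c(σ) = c(τ) + 1 (the orbit partition of σ is obtained from that of τ by splitting one block into two). Then τ * σ⁻¹ is a transposition; in particular ℓ(σ⁻¹ * τ) = 1. -/

import Mathlib

/-- Minimal number of transpositions whose product is `σ` (0 for the identity);
this is the graph distance from the identity to `σ` in the Cayley graph of the
symmetric group on `Fin n` generated by all transpositions. -/
noncomputable def swapLength (n : ℕ) (σ : Equiv.Perm (Fin n)) : ℕ :=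
  sInf {k | ∃ l : List (Equiv.Perm (Fin n)),
    l.length = k ∧ (∀ t ∈ l, t.IsSwap) ∧ l.prod = σ}

/-- Number of orbits of `σ` acting on `Fin n` (fixed points count as orbits). -/
noncomputable def orbitCount (n : ℕ) (σ : Equiv.Perm (Fin n)) : ℕ :=
  Nat.card (MulAction.orbitRel.Quotient (Subgroup.zpowers σ) (Fin n))

/-!
Write `ℓ` for `swapLength` and `c` for `orbitCount`. Multiplying by a transposition either
splits a cycle or joins two, so `ℓ π + c π = n`. Walking a geodesic from `finRotate n` back to
`π`, every step cuts a cycle, and cutting the cycle through `A` and `B` splits it into its arcs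
`[A, B)` and `[B, A)`; hence each `π` on a geodesic from `1` to `finRotate n` has noncrossing
cycles, each traversed in increasing cyclic order (Biane). If the cycles of such a `σ` refine
those of such a `τ`, cutting both at `a` and `σ a` preserves the refinement, because a cycle of
`σ` cannot cross the chord from `a` to `σ a`; induction on `ℓ σ` gives
`ℓ (σ⁻¹ * τ) + ℓ σ ≤ ℓ τ`, and with `c σ = c τ + 1` this forces `ℓ (σ⁻¹ * τ) = 1`.
-/

namespace Setoid

variable {α : Type*} {s t : Setoid α}

theorem map_of_le_surjective (h : s ≤ t) : Function.Surjective (map_of_le h) := by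
  rintro ⟨x⟩
  exact ⟨⟦x⟧, rfl⟩

variable [Finite α]

theorem card_quotient_lt_of_le (h : s ≤ t) {a b : α} (hab : t a b) (hnab : ¬s a b) :
    Nat.card (Quotient t) < Nat.card (Quotient s) := by
  by_contra! hle
  have hinj := ((map_of_le_surjective h).bijective_of_nat_card_le hle).1
  exact hnab (Quotient.exact (hinj (Quotient.sound hab : (⟦a⟧ : Quotient t) = ⟦b⟧)))

theorem card_quotient_le_succ (h : s ≤ t) {b : α}
    (hb : ∀ x y, t x y → s x y ∨ s x b ∨ s y b) :
    Nat.card (Quotient s) ≤ Nat.card (Quotient t) + 1 := by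
  have hinj : Set.InjOn (map_of_le h) (Set.univ \ {⟦b⟧}) := by
    rintro ⟨x⟩ ⟨-, hx⟩ ⟨y⟩ ⟨-, hy⟩ hxy
    rcases hb x y (Quotient.exact hxy) with hxy | hxb | hyb
    · exact Quotient.sound hxy
    · exact absurd (Quotient.sound hxb) hx
    · exact absurd (Quotient.sound hyb) hy
  have hle := Set.ncard_le_ncard_of_injOn _ (fun _ _ => Set.mem_univ _) hinj Set.finite_univ
  rw [Set.ncard_univ] at hle
  have := Set.ncard_sdiff_singleton_add_one (Set.mem_univ (⟦b⟧ : Quotient s)) Set.finite_univ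
  rw [Set.ncard_univ] at this
  omega

end Setoid

namespace Equiv.Perm

variable {α : Type*} {f g : Perm α} {x y : α}

theorem orbitRel_zpowers (f : Perm α) :
    MulAction.orbitRel (Subgroup.zpowers f) α = SameCycle.setoid f := by
  ext x y
  rw [MulAction.orbitRel_apply, MulAction.mem_orbit_iff]
  constructor
  · rintro ⟨⟨_, k, rfl⟩, h⟩
    exact (show f.SameCycle y x from ⟨k, h⟩).symm
  · rintro h
    obtain ⟨k, hk⟩ := h.symm
    exact ⟨⟨f ^ k, k, rfl⟩, hk⟩

section Finite
variable [Finite α]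

theorem SameCycle.mem_of_mapsTo {s : Set α} (hs : Set.MapsTo f s s) (hx : x ∈ s)
    (h : f.SameCycle x y) : y ∈ s := by
  obtain ⟨i, rfl⟩ := h.exists_nat_pow_eq
  rw [coe_pow]
  exact hs.iterate i hx

theorem sameCycle_le_of_forall_sameCycle_apply (h : ∀ x, g.SameCycle x (f x)) :
    f.SameCycle ≤ g.SameCycle := fun x _ hxy =>
  hxy.mem_of_mapsTo (s := {y | g.SameCycle x y}) (fun _ hy => hy.trans (h _)) SameCycle.rfl

theorem SameCycle.of_forall_apply_eq (hfg : ∀ z, f.SameCycle x z → g z = f z)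
    (h : f.SameCycle x y) : g.SameCycle x y :=
  (h.mem_of_mapsTo (s := {y | f.SameCycle x y ∧ g.SameCycle x y})
    (fun z hz => ⟨hz.1.apply_right, hfg z hz.1 ▸ hz.2.apply_right⟩) ⟨.rfl, .rfl⟩).2

variable [DecidableEq α] {a b : α}

theorem sameCycle_swap_mul_le (hab : f.SameCycle a b) :
    (swap a b * f).SameCycle ≤ f.SameCycle := by
  refine sameCycle_le_of_forall_sameCycle_apply fun x => ?_
  have hx : f.SameCycle x (f x) := SameCycle.rfl.apply_right
  rw [mul_apply]
  rcases eq_or_ne (f x) a with ha | ha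
  · rw [ha, swap_apply_left]
    rw [ha] at hx
    exact hx.trans hab
  rcases eq_or_ne (f x) b with hb | hb
  · rw [hb, swap_apply_right]
    rw [hb] at hx
    exact hx.trans hab.symm
  · rwa [swap_apply_of_ne_of_ne ha hb]

theorem not_sameCycle_swap_mul (hab : f.SameCycle a b) (hne : a ≠ b) :
    ¬(swap a b * f).SameCycle a b := by
  have hex : ∃ i, 0 < i ∧ (f ^ i) b = a :=
    let ⟨i, hi, _, h⟩ := hab.symm.exists_pow_eq''
    ⟨i, hi, h⟩
  set i := Nat.find hex
  obtain ⟨hi, hia⟩ : 0 < i ∧ (f ^ i) b = a := Nat.find_spec hex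
  have hna : ∀ j < i, (f ^ j) b ≠ a := by
    rintro (_ | j) hj h
    · exact hne h.symm
    · exact Nat.find_min hex hj ⟨j.succ_pos, h⟩
  have hnb : ∀ j, 0 < j → j < i → (f ^ j) b ≠ b := by
    intro j hj hji h
    refine Nat.find_min hex (m := i - j) (by omega) ⟨by omega, ?_⟩
    rw [← h, ← mul_apply, ← pow_add, Nat.sub_add_cancel hji.le, hia]
  -- the orbit of `b` under the product is `b, f b, …, f^(i-1) b`, where `f^i b = a`
  have hmaps : Set.MapsTo (swap a b * f) {y | ∃ j < i, (f ^ j) b = y}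
      {y | ∃ j < i, (f ^ j) b = y} := by
    rintro _ ⟨j, hj, rfl⟩
    rw [mul_apply, ← mul_apply f, ← pow_succ']
    rcases (Nat.succ_le_of_lt hj).lt_or_eq with hj' | hj'
    · exact ⟨j + 1, hj', (swap_apply_of_ne_of_ne (hna _ hj') (hnb _ j.succ_pos hj')).symm⟩
    · rw [Nat.succ_eq_add_one] at hj'
      rw [hj', hia, swap_apply_left]
      exact ⟨0, hi, rfl⟩
  intro hab
  obtain ⟨j, hj, hja⟩ := hab.symm.mem_of_mapsTo hmaps ⟨0, hi, rfl⟩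
  exact hna j hj hja

theorem sameCycle_swap_mul_of_not_sameCycle (hab : ¬f.SameCycle a b) :
    (swap a b * f).SameCycle a b := by
  -- the product agrees with `f` on the cycle of `a` except at `f⁻¹ a`, which it sends to `b`
  have hcycle : ∀ z, f.SameCycle a z → (swap a b * f).SameCycle a z := by
    intro z hz
    refine hz.mem_of_mapsTo (s := {z | f.SameCycle a z → (swap a b * f).SameCycle a z})
      (fun z hz hfz => ?_) (fun _ => .rfl) hz
    rcases eq_or_ne (f z) a with ha | ha
    · rw [ha]
    have hb : f z ≠ b := fun hb => hab (hb ▸ hfz)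
    have := (hz (sameCycle_apply_right.1 hfz)).apply_right
    rwa [mul_apply, swap_apply_of_ne_of_ne ha hb] at this
  have := (hcycle (f.symm a) (sameCycle_symm_apply_right.2 .rfl)).apply_right
  rwa [mul_apply, apply_symm_apply, swap_apply_left] at this

theorem SameCycle.swap_mul_or (a b : α) (h : f.SameCycle a y) :
    (swap a b * f).SameCycle a y ∨ (swap a b * f).SameCycle b y := by
  refine h.mem_of_mapsTo (s := {z | (swap a b * f).SameCycle a z ∨ (swap a b * f).SameCycle b z})
    (fun z hz => ?_) (.inl .rfl)
  change _ ∨ _ at hz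
  have hz' : (swap a b * f).SameCycle a ((swap a b * f) z) ∨
      (swap a b * f).SameCycle b ((swap a b * f) z) := by
    simpa only [sameCycle_apply_right] using hz
  have hfz : f z = swap a b ((swap a b * f) z) := by simp
  rw [Set.mem_ofPred_eq, hfz]
  rcases eq_or_ne ((swap a b * f) z) a with ha | ha
  · rw [ha, swap_apply_left]
    exact .inr .rfl
  rcases eq_or_ne ((swap a b * f) z) b with hb | hb
  · rw [hb, swap_apply_right]
    exact .inl .rfl
  · rwa [swap_apply_of_ne_of_ne ha hb]

theorem card_quotient_sameCycle_swap_mul (hab : f.SameCycle a b) (hne : a ≠ b) :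
    Nat.card (Quotient (SameCycle.setoid (swap a b * f))) =
      Nat.card (Quotient (SameCycle.setoid f)) + 1 := by
  have hle : SameCycle.setoid (swap a b * f) ≤ SameCycle.setoid f :=
    fun x y h => sameCycle_swap_mul_le hab x y h
  refine le_antisymm (Setoid.card_quotient_le_succ hle (b := b) fun x y hxy => ?_)
    (Setoid.card_quotient_lt_of_le hle hab (not_sameCycle_swap_mul hab hne))
  change f.SameCycle x y at hxy
  by_cases hx : f.SameCycle a x
  · rcases hx.swap_mul_or a b with hxa | hxb
    · rcases (hx.trans hxy).swap_mul_or a b with hya | hyb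
      · exact .inl (hxa.symm.trans hya)
      · exact .inr (.inr hyb.symm)
    · exact .inr (.inl hxb.symm)
  · refine .inl (hxy.of_forall_apply_eq fun z hz => ?_)
    have hfz : f.SameCycle x (f z) := hz.apply_right
    rw [mul_apply, swap_apply_of_ne_of_ne]
    · rintro h
      exact hx (h ▸ hfz).symm
    · rintro h
      exact hx (hab.trans (h ▸ hfz).symm)

theorem card_quotient_sameCycle_swap_mul_of_not_sameCycle (hab : ¬f.SameCycle a b) :
    Nat.card (Quotient (SameCycle.setoid (swap a b * f))) + 1 =
      Nat.card (Quotient (SameCycle.setoid f)) := by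
  have hne : a ≠ b := by
    rintro rfl
    exact hab .rfl
  have := card_quotient_sameCycle_swap_mul (sameCycle_swap_mul_of_not_sameCycle hab) hne
  rwa [swap_mul_self_mul, eq_comm] at this

end Finite

end Equiv.Perm

section SwapLength

open Equiv Equiv.Perm

variable {n : ℕ}

theorem orbitCount_eq_card_quotient (f : Perm (Fin n)) :
    orbitCount n f = Nat.card (Quotient (SameCycle.setoid f)) := by
  rw [orbitCount, MulAction.orbitRel.Quotient, orbitRel_zpowers]

theorem orbitCount_le (f : Perm (Fin n)) : orbitCount n f ≤ n := by
  rw [orbitCount_eq_card_quotient]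
  simpa using
    Nat.card_le_card_of_surjective (Quotient.mk (SameCycle.setoid f)) Quotient.mk_surjective

theorem orbitCount_one : orbitCount n 1 = n := by
  rw [orbitCount_eq_card_quotient,
    ← Nat.card_congr (Equiv.ofBijective (Quotient.mk (SameCycle.setoid 1))
      ⟨fun x y h => sameCycle_one.1 (Quotient.exact h), Quotient.mk_surjective⟩), Nat.card_fin]

theorem orbitCount_swap_mul {f : Perm (Fin n)} {a b : Fin n} (hab : f.SameCycle a b)
    (hne : a ≠ b) :
    orbitCount n (swap a b * f) = orbitCount n f + 1 := by
  simpa only [orbitCount_eq_card_quotient] using card_quotient_sameCycle_swap_mul hab hne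

theorem orbitCount_swap_mul_of_not_sameCycle {f : Perm (Fin n)} {a b : Fin n}
    (hab : ¬f.SameCycle a b) : orbitCount n (swap a b * f) + 1 = orbitCount n f := by
  simpa only [orbitCount_eq_card_quotient] using
    card_quotient_sameCycle_swap_mul_of_not_sameCycle hab

theorem exists_list_swapLength (f : Perm (Fin n)) : ∃ l : List (Perm (Fin n)),
    l.length = swapLength n f ∧ (∀ t ∈ l, t.IsSwap) ∧ l.prod = f := by
  obtain ⟨l, hl⟩ := (truncSwapFactors f).out
  exact Nat.sInf_mem (s := {k | ∃ l : List (Perm (Fin n)),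
    l.length = k ∧ (∀ t ∈ l, t.IsSwap) ∧ l.prod = f}) ⟨l.length, l, rfl, hl.2, hl.1⟩

theorem swapLength_le {f : Perm (Fin n)} {l : List (Perm (Fin n))} (hl : ∀ t ∈ l, t.IsSwap)
    (hf : l.prod = f) : swapLength n f ≤ l.length :=
  Nat.sInf_le ⟨l, rfl, hl, hf⟩

theorem swapLength_eq_zero_iff {f : Perm (Fin n)} : swapLength n f = 0 ↔ f = 1 := by
  refine ⟨fun h => ?_, ?_⟩
  · obtain ⟨l, hl, -, rfl⟩ := exists_list_swapLength f
    rw [h, List.length_eq_zero_iff] at hl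
    rw [hl, List.prod_nil]
  · rintro rfl
    exact Nat.le_zero.1 (swapLength_le (l := []) (by simp) rfl)

theorem swapLength_mul_le (f g : Perm (Fin n)) :
    swapLength n (f * g) ≤ swapLength n f + swapLength n g := by
  obtain ⟨l₁, hl₁, hs₁, rfl⟩ := exists_list_swapLength f
  obtain ⟨l₂, hl₂, hs₂, rfl⟩ := exists_list_swapLength g
  rw [← hl₁, ← hl₂, ← List.length_append, ← List.prod_append]
  exact swapLength_le (fun t ht => (List.mem_append.1 ht).elim (hs₁ t) (hs₂ t)) rfl

theorem swapLength_swap_le (a b : Fin n) : swapLength n (swap a b) ≤ 1 := by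
  rcases eq_or_ne a b with rfl | hab
  · rw [swap_self, ← Perm.one_def, swapLength_eq_zero_iff.2 rfl]
    exact zero_le_one
  · exact swapLength_le (l := [swap a b]) (by simpa using ⟨a, b, hab, rfl⟩) (by simp)

theorem swapLength_add_orbitCount_le (f : Perm (Fin n)) :
    swapLength n f + orbitCount n f ≤ n := by
  by_cases hf : f = 1
  · rw [hf, swapLength_eq_zero_iff.2 rfl, orbitCount_one, zero_add]
  obtain ⟨x, hx⟩ : ∃ x, f x ≠ x := not_forall.1 fun h => hf (Perm.ext h)
  have hcut := orbitCount_swap_mul (SameCycle.rfl.apply_right : f.SameCycle x (f x)) hx.symm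
  have hrec := swapLength_add_orbitCount_le (swap x (f x) * f)
  have hlen := swapLength_mul_le (swap x (f x)) (swap x (f x) * f)
  rw [swap_mul_self_mul] at hlen
  have := swapLength_swap_le x (f x)
  omega
termination_by n - orbitCount n f
decreasing_by have := orbitCount_le (swap x (f x) * f); omega

theorem le_length_add_orbitCount_prod (l : List (Perm (Fin n))) (hl : ∀ t ∈ l, t.IsSwap) :
    n ≤ l.length + orbitCount n l.prod := by
  induction l with
  | nil => rw [List.prod_nil, orbitCount_one, List.length_nil, zero_add]
  | cons t l ih =>
    obtain ⟨a, b, hab, rfl⟩ := hl t List.mem_cons_self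
    have ih := ih fun u hu => hl u (List.mem_cons_of_mem _ hu)
    have : orbitCount n l.prod ≤ orbitCount n (swap a b * l.prod) + 1 := by
      by_cases h : l.prod.SameCycle a b
      · rw [orbitCount_swap_mul h hab]
        omega
      · rw [orbitCount_swap_mul_of_not_sameCycle h]
    rw [List.length_cons, List.prod_cons]
    omega

theorem swapLength_add_orbitCount (f : Perm (Fin n)) : swapLength n f + orbitCount n f = n := by
  obtain ⟨l, hl, hs, hf⟩ := exists_list_swapLength f
  have := le_length_add_orbitCount_prod l hs
  rw [hl, hf] at this
  exact le_antisymm (swapLength_add_orbitCount_le f) this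

theorem swapLength_swap_mul {f : Perm (Fin n)} {a b : Fin n} (hab : f.SameCycle a b)
    (hne : a ≠ b) : swapLength n (swap a b * f) + 1 = swapLength n f := by
  have := orbitCount_swap_mul hab hne
  have := swapLength_add_orbitCount f
  have := swapLength_add_orbitCount (swap a b * f)
  omega

theorem swapLength_swap_mul_of_not_sameCycle {f : Perm (Fin n)} {a b : Fin n}
    (hab : ¬f.SameCycle a b) : swapLength n (swap a b * f) = swapLength n f + 1 := by
  have := orbitCount_swap_mul_of_not_sameCycle hab
  have := swapLength_add_orbitCount f
  have := swapLength_add_orbitCount (swap a b * f)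
  omega

end SwapLength

namespace Fin

variable {n : ℕ}

/-- The number of steps from `a` forward to `b` along `0 → 1 → ⋯ → n - 1 → 0`. -/
def fwdDist (a b : Fin n) : ℕ := ((b - a : Fin n) : ℕ)

theorem fwdDist_lt (a b : Fin n) : fwdDist a b < n := (b - a).isLt

theorem fwdDist_eq_zero {a b : Fin n} : fwdDist a b = 0 ↔ a = b := by
  have := a.neZero
  rw [fwdDist, Fin.val_eq_zero_iff, sub_eq_zero, eq_comm]

theorem fwdDist_self (a : Fin n) : fwdDist a a = 0 := fwdDist_eq_zero.2 rfl

theorem fwdDist_right_inj (o : Fin n) {a b : Fin n} : fwdDist o a = fwdDist o b ↔ a = b := by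
  have := o.neZero
  rw [fwdDist, fwdDist, Fin.val_inj, sub_left_inj]

/-- Rewriting with this turns cyclic-order arguments into linear arithmetic. -/
theorem fwdDist_eq_ite (o a b : Fin n) : fwdDist a b =
    if fwdDist o a ≤ fwdDist o b then fwdDist o b - fwdDist o a
    else fwdDist o b + n - fwdDist o a := by
  have := o.neZero
  have ha := fwdDist_lt o a
  have hb := fwdDist_lt o b
  rw [show fwdDist a b = ((b - o - (a - o) : Fin n) : ℕ) by rw [sub_sub_sub_cancel_right]; rfl,
    Fin.sub_def]
  change (n - fwdDist o a + fwdDist o b) % n = _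
  split_ifs with h
  · rw [show n - fwdDist o a + fwdDist o b = fwdDist o b - fwdDist o a + n by omega,
      Nat.add_mod_right, Nat.mod_eq_of_lt (by omega)]
  · rw [Nat.mod_eq_of_lt (by omega)]
    omega

theorem fwdDist_lt_iff_not_lt {A B : Fin n} (hne : A ≠ B) (z : Fin n) :
    fwdDist A z < fwdDist A B ↔ ¬fwdDist B z < fwdDist B A := by
  have := fwdDist_lt A z
  have := fwdDist_lt A B
  have := fwdDist_eq_zero.not.2 hne
  rw [fwdDist_eq_ite A B z, fwdDist_eq_ite A B A, fwdDist_self]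
  split_ifs <;> omega

end Fin

namespace Equiv.Perm

open Fin

variable {n : ℕ}

def IsOriented (π : Perm (Fin n)) : Prop :=
  ∀ a y, π.SameCycle a y → y ≠ a → fwdDist a (π a) ≤ fwdDist a y

/-- Equivalent to the usual condition that no `a < u < c < v` (cyclically) have `a, c` in one
cycle and `u, v` in another. -/
def IsNoncrossing (π : Perm (Fin n)) : Prop :=
  ∀ a c u v, π.SameCycle a c → ¬π.SameCycle a u → π.SameCycle u v →
    fwdDist a u < fwdDist a c → fwdDist a v < fwdDist a c

variable {π : Perm (Fin n)} {A B x y : Fin n}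

namespace IsOriented

theorem fwdDist_lt_of_apply_eq (hπ : IsOriented π) (hAB : π.SameCycle A B) (hne : A ≠ B)
    (hx : π x = B) : fwdDist A x < fwdDist A B := by
  have hxB : x ≠ B := by
    rintro rfl
    exact hne (hAB.eq_of_right hx)
  rcases eq_or_ne A x with rfl | hAx
  · rw [fwdDist_self]
    exact Nat.pos_of_ne_zero (fwdDist_eq_zero.not.2 hne)
  have hxA : π.SameCycle x A :=
    (hx ▸ SameCycle.rfl.apply_right : π.SameCycle x B).trans hAB.symm
  have horn := hπ x A hxA hAx
  have := fwdDist_lt A x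
  have := fwdDist_lt A B
  have := fwdDist_eq_zero.not.2 hne
  have := fwdDist_eq_zero.not.2 hAx
  have := (fwdDist_right_inj A).not.2 hxB
  rw [hx, fwdDist_eq_ite A x B, fwdDist_eq_ite A x A, fwdDist_self] at horn
  split_ifs at horn <;> omega

theorem fwdDist_apply_lt_iff (hπ : IsOriented π) (hAB : π.SameCycle A B)
    (hAy : π.SameCycle A y) (hA : π y ≠ A) (hB : π y ≠ B) :
    fwdDist A (π y) < fwdDist A B ↔ fwdDist A y < fwdDist A B := by
  have h₁ : A ≠ y → fwdDist y (π y) ≤ fwdDist y A := hπ y A hAy.symm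
  have h₂ : B ≠ y → fwdDist y (π y) ≤ fwdDist y B := hπ y B (hAy.symm.trans hAB)
  have := fwdDist_lt A y
  have := fwdDist_lt A B
  have := fwdDist_lt A (π y)
  simp only [ne_eq, ← fwdDist_right_inj A] at h₁ h₂ hA hB
  rw [fwdDist_eq_ite A y (π y), fwdDist_eq_ite A y A, fwdDist_self] at h₁
  rw [fwdDist_eq_ite A y (π y), fwdDist_eq_ite A y B] at h₂
  rw [fwdDist_self] at hA
  split_ifs at h₁ h₂ <;> omega

theorem sameCycle_swap_mul_of_fwdDist_lt (hπ : IsOriented π) (hAB : π.SameCycle A B)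
    (hne : A ≠ B) {z : Fin n} (hz : π.SameCycle A z) (hzB : fwdDist A z < fwdDist A B) :
    (swap A B * π).SameCycle A z := by
  rcases eq_or_ne z A with rfl | hzA
  · exact .rfl
  have hzB' : z ≠ B := by
    rintro rfl
    exact lt_irrefl _ hzB
  have hp : π (π.symm z) = z := apply_symm_apply π z
  have hpz := hπ.fwdDist_lt_of_apply_eq hz hzA.symm hp
  have ih := hπ.sameCycle_swap_mul_of_fwdDist_lt hAB hne (sameCycle_symm_apply_right.2 hz)
    (hpz.trans hzB)
  have hstep : (swap A B * π) (π.symm z) = z := by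
    rw [mul_apply, hp, swap_apply_of_ne_of_ne hzA hzB']
  have hpz' := (SameCycle.refl (swap A B * π) (π.symm z)).apply_right
  rw [hstep] at hpz'
  exact ih.trans hpz'
termination_by fwdDist A z

/-- Cutting the cycle through `A` and `B` splits it into its arcs `[A, B)` and `[B, A)`. -/
theorem sameCycle_swap_mul_iff (hπ : IsOriented π) (hAB : π.SameCycle A B) (hne : A ≠ B) :
    (swap A B * π).SameCycle x y ↔ π.SameCycle x y ∧
      (π.SameCycle A x → (fwdDist A x < fwdDist A B ↔ fwdDist A y < fwdDist A B)) := by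
  constructor
  · intro h
    refine h.mem_of_mapsTo (s := {y | π.SameCycle x y ∧
      (π.SameCycle A x → (fwdDist A x < fwdDist A B ↔ fwdDist A y < fwdDist A B))})
      ?_ ⟨.rfl, fun _ => Iff.rfl⟩
    rintro z ⟨hxz, hside⟩
    have hxπz : π.SameCycle x (π z) := hxz.apply_right
    rw [Set.mem_ofPred_eq, mul_apply]
    rcases eq_or_ne (π z) A with hA | hA
    · rw [hA, swap_apply_left]
      refine ⟨(hA ▸ hxπz).trans hAB, fun hAx => (hside hAx).trans ?_⟩
      have := hπ.fwdDist_lt_of_apply_eq hAB.symm hne.symm hA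
      rw [fwdDist_lt_iff_not_lt hne z]
      simp only [this, not_true, lt_irrefl]
    rcases eq_or_ne (π z) B with hB | hB
    · rw [hB, swap_apply_right]
      refine ⟨(hB ▸ hxπz).trans hAB.symm, fun hAx => (hside hAx).trans ?_⟩
      have := hπ.fwdDist_lt_of_apply_eq hAB hne hB
      rw [fwdDist_self]
      exact iff_of_true this (this.trans_le' (Nat.zero_le _))
    · rw [swap_apply_of_ne_of_ne hA hB]
      exact ⟨hxπz, fun hAx => (hside hAx).trans
        (hπ.fwdDist_apply_lt_iff hAB (hAx.trans hxz) hA hB).symm⟩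
  · rintro ⟨hxy, hside⟩
    by_cases hAx : π.SameCycle A x
    · have hAy := hAx.trans hxy
      by_cases hx : fwdDist A x < fwdDist A B
      · exact (hπ.sameCycle_swap_mul_of_fwdDist_lt hAB hne hAx hx).symm.trans
          (hπ.sameCycle_swap_mul_of_fwdDist_lt hAB hne hAy ((hside hAx).1 hx))
      · have hy := mt (hside hAx).2 hx
        rw [fwdDist_lt_iff_not_lt hne, not_not] at hx hy
        have hBx := hπ.sameCycle_swap_mul_of_fwdDist_lt hAB.symm hne.symm (hAB.symm.trans hAx) hx
        have hBy := hπ.sameCycle_swap_mul_of_fwdDist_lt hAB.symm hne.symm (hAB.symm.trans hAy) hy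
        rw [swap_comm] at hBx hBy
        exact hBx.symm.trans hBy
    · refine hxy.of_forall_apply_eq fun z hz => ?_
      have hπz : π.SameCycle x (π z) := hz.apply_right
      rw [mul_apply, swap_apply_of_ne_of_ne]
      · rintro h
        exact hAx (h ▸ hπz).symm
      · rintro h
        exact hAx (hAB.trans (h ▸ hπz).symm)

theorem fwdDist_le_of_swap_mul (hπ : IsOriented π) (hAB : π.SameCycle A B) (hne : A ≠ B)
    (hxA : π x = A) (hxy : (swap A B * π).SameCycle x y) (hyx : y ≠ x) :
    fwdDist x B ≤ fwdDist x y := by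
  obtain ⟨hxy, hside⟩ := (hπ.sameCycle_swap_mul_iff hAB hne).1 hxy
  have hAx : π.SameCycle A x := (hxA ▸ SameCycle.rfl.apply_right : π.SameCycle x A).symm
  have hx := hπ.fwdDist_lt_of_apply_eq hAB.symm hne.symm hxA
  have hside := hside hAx
  rw [fwdDist_lt_iff_not_lt hne x, fwdDist_lt_iff_not_lt hne y] at hside
  have horn := hπ x y hxy hyx
  rw [hxA] at horn
  have := fwdDist_lt B x
  have := fwdDist_lt B y
  have := fwdDist_lt B A
  have := (fwdDist_right_inj B).not.2 hyx
  rw [fwdDist_eq_ite B x A, fwdDist_eq_ite B x y] at horn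
  rw [fwdDist_eq_ite B x B, fwdDist_eq_ite B x y, fwdDist_self]
  split_ifs at horn ⊢ <;> omega

theorem swap_mul (hπ : IsOriented π) (hAB : π.SameCycle A B) (hne : A ≠ B) :
    IsOriented (swap A B * π) := by
  intro x y hxy hyx
  rcases eq_or_ne (π x) A with hA | hA
  · rw [mul_apply, hA, swap_apply_left]
    exact hπ.fwdDist_le_of_swap_mul hAB hne hA hxy hyx
  rcases eq_or_ne (π x) B with hB | hB
  · rw [mul_apply, hB, swap_apply_right]
    rw [swap_comm] at hxy
    exact hπ.fwdDist_le_of_swap_mul hAB.symm hne.symm hB hxy hyx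
  · rw [mul_apply, swap_apply_of_ne_of_ne hA hB]
    exact hπ x y ((hπ.sameCycle_swap_mul_iff hAB hne).1 hxy).1 hyx

end IsOriented

theorem IsNoncrossing.swap_mul (hπ' : IsNoncrossing π) (hπ : IsOriented π)
    (hAB : π.SameCycle A B) (hne : A ≠ B) : IsNoncrossing (swap A B * π) := by
  intro a c u v hac hau huv hu
  rw [hπ.sameCycle_swap_mul_iff hAB hne] at hac hau huv
  by_cases hau' : π.SameCycle a u
  · -- `a` and `u` lie on the two arcs into which the cut splits the cycle of `A`
    have hAa : π.SameCycle A a := by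
      by_contra h
      exact hau ⟨hau', fun h' => absurd h' h⟩
    have hac := hac.2 hAa
    have huv := huv.2 (hAa.trans hau')
    have hau : ¬(fwdDist A a < fwdDist A B ↔ fwdDist A u < fwdDist A B) :=
      fun h => hau ⟨hau', fun _ => h⟩
    have := fwdDist_lt A a
    have := fwdDist_lt A c
    have := fwdDist_lt A u
    have := fwdDist_lt A v
    rw [fwdDist_eq_ite A a c, fwdDist_eq_ite A a u] at hu
    rw [fwdDist_eq_ite A a c, fwdDist_eq_ite A a v]
    split_ifs at hu ⊢ <;> omega
  · exact hπ' a c u v hac.1 hau' huv.1 hu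

theorem sameCycle_swap_mul_le_of_le {σ τ : Perm (Fin n)} (hσ : IsOriented σ)
    (hσ' : IsNoncrossing σ) (hτ : IsOriented τ) (hsub : σ.SameCycle ≤ τ.SameCycle)
    {a : Fin n} (ha : σ a ≠ a) : (swap a (σ a) * σ).SameCycle ≤ (swap a (σ a) * τ).SameCycle := by
  have hσa : σ.SameCycle a (σ a) := SameCycle.rfl.apply_right
  intro x y hxy
  rw [hσ.sameCycle_swap_mul_iff hσa ha.symm] at hxy
  rw [hτ.sameCycle_swap_mul_iff (hsub _ _ hσa) ha.symm]
  refine ⟨hsub _ _ hxy.1, fun _ => ?_⟩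
  by_cases hax : σ.SameCycle a x
  · exact hxy.2 hax
  · exact ⟨hσ' a (σ a) x y hσa hax hxy.1,
      hσ' a (σ a) y x hσa (fun h => hax (h.trans hxy.1.symm)) hxy.1.symm⟩

theorem sameCycle_finRotate (x y : Fin n) : (finRotate n).SameCycle x y := by
  rcases lt_or_ge n 2 with hn | hn
  · exact (Fin.ext (by omega) : x = y).sameCycle _
  · have hfix : ∀ z, finRotate n z ≠ z := fun z => by
      rw [← mem_support, support_finRotate_of_le hn]
      exact Finset.mem_univ z
    exact (isCycle_finRotate_of_le hn).sameCycle (hfix x) (hfix y)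

theorem isOriented_finRotate : IsOriented (finRotate n) := by
  intro a y _ hya
  have := a.neZero
  rw [finRotate_apply, fwdDist, add_sub_cancel_left, Fin.val_one']
  exact (Nat.mod_le 1 n).trans (Nat.pos_of_ne_zero (fwdDist_eq_zero.not.2 hya.symm))

theorem isNoncrossing_finRotate : IsNoncrossing (finRotate n) :=
  fun a _ u _ _ hau _ _ => absurd (sameCycle_finRotate a u) hau

end Equiv.Perm

section Geodesic

open Equiv Equiv.Perm

variable {n : ℕ}

theorem orbitCount_finRotate_le : orbitCount n (finRotate n) ≤ 1 := by
  rw [orbitCount_eq_card_quotient, Finite.card_le_one_iff_subsingleton]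
  refine ⟨fun p q => Quotient.inductionOn₂ p q fun x y => Quotient.sound ?_⟩
  exact sameCycle_finRotate x y

theorem sub_one_le_swapLength_finRotate : n - 1 ≤ swapLength n (finRotate n) := by
  have := swapLength_add_orbitCount (finRotate n)
  have := orbitCount_finRotate_le (n := n)
  omega

theorem isOriented_and_isNoncrossing_of_geodesic {π : Perm (Fin n)}
    (h : swapLength n π + swapLength n (π⁻¹ * finRotate n) = n - 1) :
    IsOriented π ∧ IsNoncrossing π := by
  obtain ⟨l, hl, hs, hprod⟩ := exists_list_swapLength (π⁻¹ * finRotate n)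
  cases l with
  | nil =>
    rw [List.prod_nil, eq_comm, inv_mul_eq_one] at hprod
    rw [hprod]
    exact ⟨isOriented_finRotate, isNoncrossing_finRotate⟩
  | cons t r =>
    obtain ⟨a, b, hab, rfl⟩ := hs t List.mem_cons_self
    obtain ⟨π', rfl⟩ : ∃ π', π' * swap a b = π :=
      ⟨π * swap a b, mul_swap_mul_self a b π⟩
    have hπ : swap (π' a) (π' b) * π' = π' * swap a b := by
      rw [swap_apply_apply, inv_mul_cancel_right]
    have hne : π' a ≠ π' b := π'.injective.ne hab
    have hr : swapLength n (π'⁻¹ * finRotate n) + 1 ≤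
        swapLength n ((π' * swap a b)⁻¹ * finRotate n) := by
      rw [← hl, List.length_cons, add_le_add_iff_right]
      refine swapLength_le (fun u hu => hs u (List.mem_cons_of_mem _ hu)) ?_
      rw [List.prod_cons, mul_inv_rev, swap_inv, mul_assoc] at hprod
      exact mul_left_cancel hprod
    have hπ' := swapLength_mul_le (π' * swap a b) (swap a b)
    rw [mul_swap_mul_self] at hπ'
    have := swapLength_swap_le a b
    have htri : n - 1 ≤ swapLength n π' + swapLength n (π'⁻¹ * finRotate n) := by
      calc n - 1 ≤ swapLength n (finRotate n) := sub_one_le_swapLength_finRotate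
        _ = swapLength n (π' * (π'⁻¹ * finRotate n)) := by rw [mul_inv_cancel_left]
        _ ≤ _ := swapLength_mul_le _ _
    obtain ⟨ho, hnc⟩ := isOriented_and_isNoncrossing_of_geodesic (π := π') (by omega)
    -- a swap joining two cycles of `π'` would make `π` longer than `π'`
    have hcut : π'.SameCycle (π' a) (π' b) := by
      by_contra hcut
      have := swapLength_swap_mul_of_not_sameCycle hcut
      rw [hπ] at this
      omega
    rw [← hπ]
    exact ⟨ho.swap_mul hcut hne, hnc.swap_mul ho hcut hne⟩
termination_by swapLength n (π⁻¹ * finRotate n)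
decreasing_by omega

theorem swapLength_inv_mul_add_le {σ τ : Perm (Fin n)} (hσ : IsOriented σ)
    (hσ' : IsNoncrossing σ) (hτ : IsOriented τ) (hτ' : IsNoncrossing τ)
    (hsub : σ.SameCycle ≤ τ.SameCycle) :
    swapLength n (σ⁻¹ * τ) + swapLength n σ ≤ swapLength n τ := by
  by_cases h1 : σ = 1
  · rw [h1, inv_one, one_mul, swapLength_eq_zero_iff.2 rfl, add_zero]
  obtain ⟨a, ha⟩ : ∃ a, σ a ≠ a := not_forall.1 fun h => h1 (Perm.ext h)
  have hσa : σ.SameCycle a (σ a) := SameCycle.rfl.apply_right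
  have hτa : τ.SameCycle a (σ a) := hsub _ _ hσa
  have hlσ := swapLength_swap_mul hσa ha.symm
  have hlτ := swapLength_swap_mul hτa ha.symm
  have ih := swapLength_inv_mul_add_le (hσ.swap_mul hσa ha.symm) (hσ'.swap_mul hσ hσa ha.symm)
    (hτ.swap_mul hτa ha.symm) (hτ'.swap_mul hτ hτa ha.symm)
    (sameCycle_swap_mul_le_of_le hσ hσ' hτ hsub ha)
  rw [mul_inv_rev, swap_inv, mul_assoc, swap_mul_self_mul] at ih
  omega
termination_by swapLength n σ
decreasing_by omega

theorem exists_swap_of_swapLength_eq_one {f : Perm (Fin n)} (h : swapLength n f = 1) :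
    ∃ a b, a ≠ b ∧ f = swap a b := by
  obtain ⟨l, hl, hs, rfl⟩ := exists_list_swapLength f
  rw [h, List.length_eq_one_iff] at hl
  obtain ⟨t, rfl⟩ := hl
  obtain ⟨a, b, hab, rfl⟩ := hs t (List.mem_singleton_self t)
  exact ⟨a, b, hab, List.prod_singleton⟩

end Geodesic

theorem covering_is_edge_general (n : ℕ) (σ τ : Equiv.Perm (Fin n))
    (hσ : swapLength n σ + swapLength n (σ⁻¹ * finRotate n) = n - 1)
    (hτ : swapLength n τ + swapLength n (τ⁻¹ * finRotate n) = n - 1)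
    (hsub : ∀ i j : Fin n, σ.SameCycle i j → τ.SameCycle i j)
    (hc : orbitCount n σ = orbitCount n τ + 1) :
    (∃ a b : Fin n, a ≠ b ∧ τ * σ⁻¹ = Equiv.swap a b) ∧
      swapLength n (σ⁻¹ * τ) = 1 := by
  obtain ⟨hσo, hσn⟩ := isOriented_and_isNoncrossing_of_geodesic hσ
  obtain ⟨hτo, hτn⟩ := isOriented_and_isNoncrossing_of_geodesic hτ
  have hle := swapLength_inv_mul_add_le hσo hσn hτo hτn hsub
  have := swapLength_add_orbitCount σ
  have := swapLength_add_orbitCount τ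
  have hne : σ⁻¹ * τ ≠ 1 := by
    rw [Ne, inv_mul_eq_one]
    rintro rfl
    omega
  have h1 : swapLength n (σ⁻¹ * τ) = 1 := by
    have := swapLength_eq_zero_iff.not.2 hne
    omega
  obtain ⟨a, b, hab, hswap⟩ := exists_swap_of_swapLength_eq_one h1
  refine ⟨⟨σ a, σ b, σ.injective.ne hab, ?_⟩, h1⟩
  rw [Equiv.swap_apply_apply, ← hswap, mul_inv_cancel_left]

/-- If `σ` and `τ` lie in the interval from `e` to `s`, every `σ`-orbit is
contained in a `τ`-orbit, and the orbit partition of `σ` has exactly one more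
block than that of `τ`, then `τ * σ⁻¹` is a transposition; in particular `σ`
and `τ` are at distance one in the Cayley graph. -/
theorem covering_is_edge (n : ℕ) (hn : 1 ≤ n) (σ τ : Equiv.Perm (Fin n))
    (hσ : swapLength n σ + swapLength n (σ⁻¹ * finRotate n) = n - 1)
    (hτ : swapLength n τ + swapLength n (τ⁻¹ * finRotate n) = n - 1)
    (hsub : ∀ i j : Fin n, σ.SameCycle i j → τ.SameCycle i j)
    (hc : orbitCount n σ = orbitCount n τ + 1) :
    (∃ a b : Fin n, a ≠ b ∧ τ * σ⁻¹ = Equiv.swap a b) ∧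
      swapLength n (σ⁻¹ * τ) = 1 :=
  covering_is_edge_general n σ τ hσ hτ hsub hc
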